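/- Let P ∈ P_m(ℂ^{n×n}) be a regular skew-symmetric matrix polynomial of degree m ≥ 1, and let L(z) = zX + Y with X, Y ∈ ℂ^{mn×mn} skew-symmetric be a pencil in 𝕃₁(P) with right ansatz vector v ∈ ℂ^m, ‖v‖₂ = 1. Let S_P denote the skew-symmetric polynomials in P_m(ℂ^{n×n}) and S_L the skew-symmetric pencils of size mn. Then for every λ ∈ ℂ and x ∈ ℂⁿ with x^H x = 1 and for M ∈ {F, 2}: sqrt((m+1)/(2m)) · η_M^{S_P}(λ, x, P) ≤ η_M^{S_L}(λ, Λ_{m−1}⊗x, L) ≤ η_M^{S_P}(λ, x, P); indeed η_M^{S_L}(λ, Λ_{m−1}⊗x, L)/η_M^{S_P}(λ, x, P) = η(λ, Λ_{m−1}⊗x, L)/η(λ, x, P) whenever these ratios are defined. -/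

import Mathlib

open scoped ComplexConjugate
open Matrix

noncomputable section

variable {ι : Type*} [Fintype ι] [DecidableEq ι]

/-- Evaluation of the matrix polynomial with coefficient list `A` at the point `z`. -/
def polyEval {m : ℕ} (A : Fin (m+1) → Matrix ι ι ℂ) (z : ℂ) : Matrix ι ι ℂ :=
  ∑ j : Fin (m+1), z ^ (j : ℕ) • A j

/-- Squared Euclidean norm of a complex vector. -/
def vecNormSq (x : ι → ℂ) : ℝ := ∑ i, ‖x i‖ ^ 2

/-- Euclidean norm of a complex vector. -/
def vecNorm (x : ι → ℂ) : ℝ := Real.sqrt (vecNormSq x)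

/-- `‖(1, z, …, z^m)‖₂²`. -/
def lamNormSq (m : ℕ) (z : ℂ) : ℝ := ∑ j : Fin (m+1), ‖z ^ (j : ℕ)‖ ^ 2

/-- Squared Frobenius norm of a matrix. -/
def frobNormSq (M : Matrix ι ι ℂ) : ℝ := ∑ i, ∑ k, ‖M i k‖ ^ 2

/-- Spectral (operator 2-) norm of a matrix. -/
def specNorm (M : Matrix ι ι ℂ) : ℝ := ‖Matrix.toEuclideanCLM (𝕜 := ℂ) M‖

/-- Frobenius norm of a matrix polynomial: `(Σ_j ‖A_j‖_F²)^{1/2}`. -/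
def polyNormF {m : ℕ} (A : Fin (m+1) → Matrix ι ι ℂ) : ℝ :=
  Real.sqrt (∑ j, frobNormSq (A j))

/-- Spectral norm of a matrix polynomial: `(Σ_j ‖A_j‖₂²)^{1/2}`. -/
def polyNorm2 {m : ℕ} (A : Fin (m+1) → Matrix ι ι ℂ) : ℝ :=
  Real.sqrt (∑ j, specNorm (A j) ^ 2)

/-- Structured backward error of `(lam, x)` as an approximate eigenpair of the matrix
polynomial `A`, with respect to the polynomial norm `N` and the structure class `S`. -/
def eta {m : ℕ} (N : (Fin (m+1) → Matrix ι ι ℂ) → ℝ)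
    (S : Set (Fin (m+1) → Matrix ι ι ℂ)) (lam : ℂ) (x : ι → ℂ)
    (A : Fin (m+1) → Matrix ι ι ℂ) : ℝ :=
  sInf {t | ∃ ΔA ∈ S, (polyEval A lam + polyEval ΔA lam) *ᵥ x = 0 ∧ t = N ΔA}

/-- A matrix polynomial is regular if `det P(z) ≠ 0` for some `z`. -/
def Regular {m : ℕ} (A : Fin (m+1) → Matrix ι ι ℂ) : Prop :=
  ∃ z : ℂ, (polyEval A z).det ≠ 0


/-- The Kronecker product of two vectors. -/
def kronVec {m' n : ℕ} (v : Fin m' → ℂ) (x : Fin n → ℂ) : Fin m' × Fin n → ℂ :=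
  fun p => v p.1 * x p.2

/-- `Λ_{m−1}(z) = (z^{m−1}, …, z, 1)ᵀ`. -/
def lamVec (m : ℕ) (z : ℂ) : Fin m → ℂ := fun i => z ^ (m - 1 - (i : ℕ))

/-- The pencil `L(z) = zX + Y`, encoded by its coefficient list `B` with `B 0 = Y`,
`B 1 = X`, lies in `𝕃₁(P)` with right ansatz vector `v`:
`L(z)·(Λ_{m−1} ⊗ I_n) = v ⊗ P(z)` for all `z` (stated via the action on vectors). -/
def InL1 {n m : ℕ} (A : Fin (m+1) → Matrix (Fin n) (Fin n) ℂ)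
    (B : Fin (1+1) → Matrix (Fin m × Fin n) (Fin m × Fin n) ℂ) (v : Fin m → ℂ) : Prop :=
  ∀ (z : ℂ) (u : Fin n → ℂ),
    polyEval B z *ᵥ kronVec (lamVec m z) u = kronVec v (polyEval A z *ᵥ u)

/-- The class of skew-symmetric matrix polynomials (for `m = 1`: skew-symmetric pencils). -/
def SkewSymPoly {ι : Type*} [Fintype ι] [DecidableEq ι] {m : ℕ} :
    Set (Fin (m+1) → Matrix ι ι ℂ) := {B | ∀ j, (B j)ᵀ = -(B j)}


/-!
Both structured backward errors have closed forms in terms of the residual ratio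
`ρ(P, x) = ‖P(λ)x‖ / (‖Λ_m‖ ‖x‖)`. For skew-symmetric `P` one has `xᵀ P(λ) x = 0`, so with
`r = P(λ)x` the skew-symmetric matrix `r xᴴ - x̄ rᵀ` maps `x` to `‖x‖² r`; spreading it over the
coefficients with weights `conj(λ^j) / ‖Λ_m‖²` gives a structured perturbation of Frobenius norm
`√2 ρ` and spectral norm at most `ρ`. Cauchy–Schwarz shows that nothing smaller works: in the
Frobenius case by pairing `ΔP(λ)` with that same rank-two matrix, otherwise through
`‖r‖ ≤ ‖ΔP(λ)‖₂ ‖x‖`.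

Since `L(λ)(Λ_{m-1} ⊗ x) = v ⊗ P(λ)x`, the pencil's ratio is `ρ(P, x)` times
`‖Λ_m‖ / (‖Λ_1‖ ‖Λ_{m-1}‖)`, and with `t = |λ|²` this factor lies in `[√((m+1)/(2m)), 1]` by
elementary inequalities between the geometric sums `Σ_{j≤m} t^j` and `(1 + t) Σ_{j<m} t^j`.
-/

open Finset

section VectorNorms

variable {n : Type*} [Fintype n]

lemma vecNormSq_nonneg (u : n → ℂ) : 0 ≤ vecNormSq u :=
  sum_nonneg fun _ _ => by positivity

lemma vecNorm_sq (u : n → ℂ) : vecNorm u ^ 2 = vecNormSq u :=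
  Real.sq_sqrt (vecNormSq_nonneg u)

lemma vecNorm_eq_norm_toLp (u : n → ℂ) : vecNorm u = ‖WithLp.toLp 2 u‖ := by
  rw [EuclideanSpace.norm_eq]
  rfl

lemma vecNorm_nonneg (u : n → ℂ) : 0 ≤ vecNorm u := Real.sqrt_nonneg _

lemma vecNorm_pos {u : n → ℂ} (hu : u ≠ 0) : 0 < vecNorm u := by
  rw [vecNorm_eq_norm_toLp, norm_pos_iff]
  exact fun h => hu (congrArg WithLp.ofLp h)

lemma vecNorm_star (u : n → ℂ) : vecNorm (star u) = vecNorm u := by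
  simp [vecNorm, vecNormSq]

lemma vecNorm_neg (u : n → ℂ) : vecNorm (-u) = vecNorm u := by
  simp [vecNorm, vecNormSq]

lemma vecNormSq_kronVec {a b : ℕ} (v : Fin a → ℂ) (y : Fin b → ℂ) :
    vecNormSq (kronVec v y) = vecNormSq v * vecNormSq y := by
  simp only [vecNormSq, kronVec, Fintype.sum_prod_type, norm_mul, mul_pow, sum_mul_sum]

lemma vecNorm_kronVec {a b : ℕ} (v : Fin a → ℂ) (y : Fin b → ℂ) :
    vecNorm (kronVec v y) = vecNorm v * vecNorm y := by
  rw [vecNorm, vecNormSq_kronVec, Real.sqrt_mul (vecNormSq_nonneg v)]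
  rfl

end VectorNorms

section Frobenius

variable {n : Type*} [Fintype n]

def frobeniusVec : Matrix n n ℂ →ₗ[ℂ] EuclideanSpace ℂ (n × n) where
  toFun M := WithLp.toLp 2 fun p => M p.1 p.2
  map_add' _ _ := rfl
  map_smul' _ _ := rfl

lemma norm_frobeniusVec_sq (M : Matrix n n ℂ) : ‖frobeniusVec M‖ ^ 2 = frobNormSq M := by
  rw [EuclideanSpace.norm_sq_eq, Fintype.sum_prod_type]
  rfl

lemma inner_frobeniusVec_vecMulVec (a b : n → ℂ) (M : Matrix n n ℂ) :
    inner ℂ (frobeniusVec (vecMulVec a b)) (frobeniusVec M) = star a ⬝ᵥ (M *ᵥ star b) := by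
  change (WithLp.toLp 2 fun p : n × n => M p.1 p.2) ⬝ᵥ star (fun p : n × n => a p.1 * b p.2) = _
  simp only [dotProduct, mulVec, Fintype.sum_prod_type, Pi.star_apply, star_mul', mul_sum]
  refine sum_congr rfl fun i _ => sum_congr rfl fun k _ => ?_
  ring

lemma norm_frobeniusVec_vecMulVec (a b : n → ℂ) :
    ‖frobeniusVec (vecMulVec a b)‖ = vecNorm a * vecNorm b := by
  rw [← Real.sqrt_sq (norm_nonneg _), norm_frobeniusVec_sq, vecNorm, vecNorm,
    ← Real.sqrt_mul (vecNormSq_nonneg a)]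
  simp only [frobNormSq, vecNormSq, vecMulVec_apply, norm_mul, mul_pow, sum_mul_sum]

lemma vecNorm_mulVec_le_frobenius (M : Matrix n n ℂ) (u : n → ℂ) :
    vecNorm (M *ᵥ u) ≤ ‖frobeniusVec M‖ * vecNorm u := by
  have hrow (i : n) : ‖(M *ᵥ u) i‖ ^ 2 ≤ (∑ k, ‖M i k‖ ^ 2) * vecNormSq u := by
    calc ‖(M *ᵥ u) i‖ ^ 2 ≤ (∑ k, ‖M i k‖ * ‖u k‖) ^ 2 := by
          gcongr
          exact (norm_sum_le _ _).trans_eq (by simp only [norm_mul])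
      _ ≤ (∑ k, ‖M i k‖ ^ 2) * vecNormSq u := sum_mul_sq_le_sq_mul_sq _ _ _
  have hsq : vecNormSq (M *ᵥ u) ≤ frobNormSq M * vecNormSq u := by
    rw [frobNormSq, sum_mul]
    exact sum_le_sum fun i _ => hrow i
  rw [← norm_frobeniusVec_sq] at hsq
  calc vecNorm (M *ᵥ u) ≤ √(‖frobeniusVec M‖ ^ 2 * vecNormSq u) := Real.sqrt_le_sqrt hsq
    _ = ‖frobeniusVec M‖ * vecNorm u := by
      rw [Real.sqrt_mul (sq_nonneg _), Real.sqrt_sq (norm_nonneg _), vecNorm]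

end Frobenius

section Spectral

variable {n : Type*} [Fintype n] [DecidableEq n]

lemma vecNorm_mulVec_le_specNorm (M : Matrix n n ℂ) (u : n → ℂ) :
    vecNorm (M *ᵥ u) ≤ specNorm M * vecNorm u := by
  rw [vecNorm_eq_norm_toLp, vecNorm_eq_norm_toLp, ← toEuclideanCLM_toLp]
  exact (toEuclideanCLM (𝕜 := ℂ) M).le_opNorm _

lemma specNorm_le_of_forall {M : Matrix n n ℂ} {c : ℝ} (hc : 0 ≤ c)
    (h : ∀ u, vecNorm (M *ᵥ u) ≤ c * vecNorm u) : specNorm M ≤ c := by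
  refine ContinuousLinearMap.opNorm_le_bound _ hc fun y => ?_
  have hy := h y.ofLp
  rwa [vecNorm_eq_norm_toLp, vecNorm_eq_norm_toLp, ← toEuclideanCLM_toLp, WithLp.toLp_ofLp] at hy

lemma specNorm_le_frobenius (M : Matrix n n ℂ) : specNorm M ≤ ‖frobeniusVec M‖ :=
  specNorm_le_of_forall (norm_nonneg _) (vecNorm_mulVec_le_frobenius M)

end Spectral


section Bessel

variable {E : Type*} [NormedAddCommGroup E] [InnerProductSpace ℂ E]

lemma sq_norm_inner_add_sq_norm_inner_le {p q : E} (hpq : inner ℂ p q = 0) (u : E) :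
    ‖q‖ ^ 2 * ‖inner ℂ p u‖ ^ 2 + ‖p‖ ^ 2 * ‖inner ℂ q u‖ ^ 2 ≤ ‖p‖ ^ 2 * ‖q‖ ^ 2 * ‖u‖ ^ 2 := by
  set K := ‖q‖ ^ 2 * ‖inner ℂ p u‖ ^ 2 + ‖p‖ ^ 2 * ‖inner ℂ q u‖ ^ 2
  -- Cauchy–Schwarz for `y`, which satisfies `⟪y, u⟫ = K` and `‖y‖² = ‖p‖² ‖q‖² K`.
  set a : ℂ := (‖q‖ ^ 2 : ℝ) * inner ℂ p u
  set b : ℂ := (‖p‖ ^ 2 : ℝ) * inner ℂ q u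
  set y : E := a • p + b • q
  have hyu : inner ℂ y u = K := by
    simp only [y, a, b, K, inner_add_left, inner_smul_left, map_mul, Complex.conj_ofReal,
      mul_assoc, Complex.conj_mul']
    push_cast
    ring
  have hyy : ‖y‖ ^ 2 = ‖p‖ ^ 2 * ‖q‖ ^ 2 * K := by
    have horth : inner ℂ (a • p) (b • q) = 0 := by
      rw [inner_smul_left, inner_smul_right, hpq, mul_zero, mul_zero]
    rw [sq, norm_add_sq_eq_norm_sq_add_norm_sq_of_inner_eq_zero _ _ horth, norm_smul, norm_smul,
      norm_mul, norm_mul, Complex.norm_real, Complex.norm_real, Real.norm_of_nonneg (sq_nonneg _),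
      Real.norm_of_nonneg (sq_nonneg _)]
    ring
  have hK : 0 ≤ K := by positivity
  have hcs : K ^ 2 ≤ ‖p‖ ^ 2 * ‖q‖ ^ 2 * K * ‖u‖ ^ 2 := by
    rw [← hyy]
    calc K ^ 2 = ‖inner ℂ y u‖ ^ 2 := by rw [hyu, Complex.norm_real, Real.norm_of_nonneg hK]
      _ ≤ (‖y‖ * ‖u‖) ^ 2 := by gcongr; exact norm_inner_le_norm y u
      _ = ‖y‖ ^ 2 * ‖u‖ ^ 2 := mul_pow _ _ _
  rcases hK.eq_or_lt with h | h
  · rw [← h]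
    positivity
  · nlinarith

lemma norm_inner_smul_sub_inner_smul_le {p q a b : E} (hpq : inner ℂ p q = 0)
    (hab : inner ℂ a b = 0) (ha : ‖a‖ = ‖q‖) (hb : ‖b‖ = ‖p‖) (u : E) :
    ‖inner ℂ p u • a - inner ℂ q u • b‖ ≤ ‖p‖ * ‖q‖ * ‖u‖ := by
  have hsq : ‖inner ℂ p u • a - inner ℂ q u • b‖ ^ 2
      = ‖q‖ ^ 2 * ‖inner ℂ p u‖ ^ 2 + ‖p‖ ^ 2 * ‖inner ℂ q u‖ ^ 2 := by
    rw [norm_sub_sq (𝕜 := ℂ), inner_smul_left, inner_smul_right, hab, norm_smul, norm_smul, ha, hb]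
    simp only [mul_zero, map_zero]
    ring
  refine (pow_le_pow_iff_left₀ (norm_nonneg _) (by positivity) two_ne_zero).mp ?_
  rw [hsq, mul_pow, mul_pow]
  exact sq_norm_inner_add_sq_norm_inner_le hpq u

end Bessel

section SkewSymmetricMatrices

variable {n : Type*}

def skewOuter (x r : n → ℂ) : Matrix n n ℂ := vecMulVec r (star x) - vecMulVec (star x) r

lemma transpose_skewOuter (x r : n → ℂ) : (skewOuter x r)ᵀ = -skewOuter x r := by
  rw [skewOuter, transpose_sub, transpose_vecMulVec, transpose_vecMulVec, neg_sub]

lemma transpose_smul_skewOuter (c : ℂ) (x r : n → ℂ) :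
    (c • skewOuter x r)ᵀ = -(c • skewOuter x r) := by
  rw [transpose_smul, transpose_skewOuter, smul_neg]

variable [Fintype n]

lemma star_dotProduct_self (x : n → ℂ) : star x ⬝ᵥ x = (vecNormSq x : ℂ) := by
  rw [← vecNorm_sq, vecNorm_eq_norm_toLp, dotProduct_comm, ← EuclideanSpace.inner_toLp_toLp,
    inner_self_eq_norm_sq_to_K]
  push_cast
  rfl

lemma dotProduct_mulVec_self_eq_zero {M : Matrix n n ℂ} (hM : Mᵀ = -M) (x : n → ℂ) :
    x ⬝ᵥ (M *ᵥ x) = 0 := by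
  have h : x ⬝ᵥ (M *ᵥ x) = -(x ⬝ᵥ (M *ᵥ x)) :=
    calc x ⬝ᵥ (M *ᵥ x) = (Mᵀ *ᵥ x) ⬝ᵥ x := by rw [dotProduct_mulVec, mulVec_transpose]
      _ = -(x ⬝ᵥ (M *ᵥ x)) := by rw [hM, neg_mulVec, neg_dotProduct, dotProduct_comm]
  linear_combination h / 2

lemma skewOuter_mulVec (x r u : n → ℂ) :
    skewOuter x r *ᵥ u = (star x ⬝ᵥ u) • r - (r ⬝ᵥ u) • star x := by
  simp only [skewOuter, sub_mulVec, vecMulVec_mulVec, op_smul_eq_smul]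

lemma skewOuter_mulVec_self {x r : n → ℂ} (hxr : x ⬝ᵥ r = 0) :
    skewOuter x r *ᵥ x = (vecNormSq x : ℂ) • r := by
  rw [skewOuter_mulVec, star_dotProduct_self, dotProduct_comm, hxr, zero_smul, sub_zero]

lemma norm_frobeniusVec_skewOuter {x r : n → ℂ} (hxr : x ⬝ᵥ r = 0) :
    ‖frobeniusVec (skewOuter x r)‖ = √2 * (vecNorm x * vecNorm r) := by
  have horth : inner ℂ (frobeniusVec (vecMulVec r (star x))) (frobeniusVec (vecMulVec (star x) r))
      = 0 := by
    rw [inner_frobeniusVec_vecMulVec, vecMulVec_mulVec, star_star, op_smul_eq_smul,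
      dotProduct_comm r, hxr, zero_smul, dotProduct_zero]
  have hsq : ‖frobeniusVec (skewOuter x r)‖ ^ 2 = 2 * (vecNorm x * vecNorm r) ^ 2 := by
    rw [skewOuter, map_sub, norm_sub_sq (𝕜 := ℂ), horth, norm_frobeniusVec_vecMulVec,
      norm_frobeniusVec_vecMulVec, vecNorm_star, map_zero]
    ring
  rw [← Real.sqrt_sq (norm_nonneg _), hsq, Real.sqrt_mul zero_le_two,
    Real.sqrt_sq (mul_nonneg (vecNorm_nonneg x) (vecNorm_nonneg r))]

lemma vecNorm_skewOuter_mulVec_le {x r : n → ℂ} (hxr : x ⬝ᵥ r = 0) (u : n → ℂ) :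
    vecNorm (skewOuter x r *ᵥ u) ≤ vecNorm x * vecNorm r * vecNorm u := by
  have hxr' : star x ⬝ᵥ star r = 0 := by
    rw [star_dotProduct_star, dotProduct_comm, hxr, star_zero]
  have h := norm_inner_smul_sub_inner_smul_le (p := WithLp.toLp 2 x) (q := WithLp.toLp 2 (star r))
    (a := WithLp.toLp 2 r) (b := WithLp.toLp 2 (star x))
    (by rw [EuclideanSpace.inner_toLp_toLp, dotProduct_comm, hxr'])
    (by rw [EuclideanSpace.inner_toLp_toLp, hxr'])
    (by rw [← vecNorm_eq_norm_toLp, ← vecNorm_eq_norm_toLp, vecNorm_star])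
    (by rw [← vecNorm_eq_norm_toLp, ← vecNorm_eq_norm_toLp, vecNorm_star]) (WithLp.toLp 2 u)
  rwa [EuclideanSpace.inner_toLp_toLp, EuclideanSpace.inner_toLp_toLp, star_star,
    dotProduct_comm u, dotProduct_comm u, ← WithLp.toLp_smul, ← WithLp.toLp_smul, ← WithLp.toLp_sub,
    ← skewOuter_mulVec, ← vecNorm_eq_norm_toLp, ← vecNorm_eq_norm_toLp, ← vecNorm_eq_norm_toLp,
    ← vecNorm_eq_norm_toLp, vecNorm_star] at h

lemma sqrt_two_mul_vecNorm_mulVec_le_frobenius {M : Matrix n n ℂ} (hM : Mᵀ = -M) (x : n → ℂ) :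
    √2 * vecNorm (M *ᵥ x) ≤ ‖frobeniusVec M‖ * vecNorm x := by
  generalize hr : M *ᵥ x = r
  have hinner :
      inner ℂ (frobeniusVec (skewOuter x r)) (frobeniusVec M) = 2 * (vecNormSq r : ℂ) := by
    rw [skewOuter, map_sub, inner_sub_left, inner_frobeniusVec_vecMulVec,
      inner_frobeniusVec_vecMulVec, star_star, dotProduct_mulVec x, ← mulVec_transpose,
      hM, neg_mulVec, hr, neg_dotProduct, dotProduct_comm r, star_dotProduct_self]
    ring
  have hcs :
      √2 * vecNorm r * (√2 * vecNorm r) ≤ √2 * vecNorm r * (‖frobeniusVec M‖ * vecNorm x) := by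
    have h := norm_inner_le_norm (𝕜 := ℂ) (frobeniusVec (skewOuter x r)) (frobeniusVec M)
    rw [hinner, norm_frobeniusVec_skewOuter (hr ▸ dotProduct_mulVec_self_eq_zero hM x), norm_mul,
      Complex.norm_real, Real.norm_of_nonneg (vecNormSq_nonneg r), Complex.norm_two,
      ← vecNorm_sq] at h
    nlinarith [Real.sq_sqrt (zero_le_two : (0 : ℝ) ≤ 2)]
  rcases (vecNorm_nonneg r).eq_or_lt with h0 | hpos
  · rw [← h0, mul_zero]
    exact mul_nonneg (norm_nonneg _) (vecNorm_nonneg x)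
  · exact le_of_mul_le_mul_left hcs (by positivity)

end SkewSymmetricMatrices

lemma norm_sum_smul_le {𝕜 E ι' : Type*} [NormedField 𝕜] [SeminormedAddCommGroup E]
    [NormedSpace 𝕜 E] [Fintype ι'] (c : ι' → 𝕜) (a : ι' → E) :
    ‖∑ i, c i • a i‖ ≤ √(∑ i, ‖c i‖ ^ 2) * √(∑ i, ‖a i‖ ^ 2) :=
  calc ‖∑ i, c i • a i‖ ≤ ∑ i, ‖c i‖ * ‖a i‖ :=
        (norm_sum_le _ _).trans_eq (sum_congr rfl fun _ _ => norm_smul _ _)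
    _ ≤ _ := Real.sum_mul_le_sqrt_mul_sqrt _ _ _

lemma lamNormSq_pos (m : ℕ) (z : ℂ) : 0 < lamNormSq m z := by
  have h := single_le_sum (f := fun j : Fin (m+1) => ‖z ^ (j : ℕ)‖ ^ 2)
    (fun j _ => by positivity) (mem_univ 0)
  simp only [Fin.val_zero, pow_zero, norm_one, one_pow] at h
  exact zero_lt_one.trans_le h

lemma sum_pow_mul_conj_pow (m : ℕ) (z : ℂ) :
    ∑ j : Fin (m+1), z ^ (j : ℕ) * conj (z ^ (j : ℕ)) = (lamNormSq m z : ℂ) := by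
  simp only [lamNormSq, Complex.mul_conj', Complex.ofReal_sum, Complex.ofReal_pow]

section MatrixPolynomials

variable {n : Type*} {m : ℕ}

/-- The weights `c_j` minimise `Σ |c_j|²` subject to `Σ z^j c_j = -1`. -/
def minimalPerturbation (m : ℕ) (z : ℂ) (K : Matrix n n ℂ) : Fin (m+1) → Matrix n n ℂ :=
  fun j => (-(conj (z ^ (j : ℕ)) / (lamNormSq m z : ℂ))) • K

lemma polyEval_minimalPerturbation (z : ℂ) (K : Matrix n n ℂ) :
    polyEval (minimalPerturbation m z K) z = -K := by
  have hL : (lamNormSq m z : ℂ) ≠ 0 := Complex.ofReal_ne_zero.mpr (lamNormSq_pos m z).ne'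
  simp only [polyEval, minimalPerturbation, smul_smul, ← sum_smul]
  rw [← neg_one_smul ℂ K]
  congr 1
  simp only [mul_neg, mul_div_assoc', sum_neg_distrib, ← sum_div, sum_pow_mul_conj_pow,
    div_self hL]

def polyNormOf (ν : Matrix n n ℂ → ℝ) (Δ : Fin (m+1) → Matrix n n ℂ) : ℝ :=
  √(∑ j, ν (Δ j) ^ 2)

variable {V : Type*} [SeminormedAddCommGroup V] [NormedSpace ℂ V] (Φ : Matrix n n ℂ →ₗ[ℂ] V)

lemma norm_map_polyEval_le (Δ : Fin (m+1) → Matrix n n ℂ) (z : ℂ) :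
    ‖Φ (polyEval Δ z)‖ ≤ √(lamNormSq m z) * polyNormOf (‖Φ ·‖) Δ := by
  simp only [polyEval, map_sum, map_smul]
  exact norm_sum_smul_le _ _

lemma polyNormOf_minimalPerturbation (z : ℂ) (M : Matrix n n ℂ) :
    polyNormOf (‖Φ ·‖) (minimalPerturbation m z M) = ‖Φ M‖ / √(lamNormSq m z) := by
  have hL := lamNormSq_pos m z
  have h : ∑ j : Fin (m+1), ‖Φ (minimalPerturbation m z M j)‖ ^ 2 = ‖Φ M‖ ^ 2 / lamNormSq m z := by
    simp only [minimalPerturbation, map_smul, norm_smul, norm_neg, norm_div, RCLike.norm_conj,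
      Complex.norm_real, Real.norm_of_nonneg hL.le, mul_pow, div_pow, ← sum_mul, ← sum_div]
    rw [← lamNormSq]
    field_simp
  rw [polyNormOf, h, Real.sqrt_div' _ hL.le, Real.sqrt_sq (norm_nonneg _)]

variable [Fintype n] [DecidableEq n]

lemma transpose_polyEval {A : Fin (m+1) → Matrix n n ℂ} (hA : A ∈ SkewSymPoly) (z : ℂ) :
    (polyEval A z)ᵀ = -polyEval A z := by
  simp only [polyEval, transpose_sum, transpose_smul, hA _, smul_neg, sum_neg_distrib]

lemma minimalPerturbation_mem_skewSymPoly {K : Matrix n n ℂ} (hK : Kᵀ = -K) (z : ℂ) :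
    minimalPerturbation m z K ∈ SkewSymPoly := fun j => by
  rw [minimalPerturbation, transpose_smul, hK, smul_neg]

end MatrixPolynomials

section BackwardErrors

variable {n : Type*} [Fintype n] {m : ℕ}

def normalizedResidual (A : Fin (m+1) → Matrix n n ℂ) (z : ℂ) (x : n → ℂ) : ℝ :=
  vecNorm (polyEval A z *ᵥ x) / (√(lamNormSq m z) * vecNorm x)

lemma polyNormF_eq_polyNormOf :
    polyNormF (ι := n) (m := m) = polyNormOf (fun M : Matrix n n ℂ => ‖frobeniusVec M‖) := by
  ext Δ
  simp only [polyNormF, polyNormOf, norm_frobeniusVec_sq]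

lemma normalizedResidual_nonneg (A : Fin (m+1) → Matrix n n ℂ) (z : ℂ) (x : n → ℂ) :
    0 ≤ normalizedResidual A z x :=
  div_nonneg (vecNorm_nonneg _) (mul_nonneg (Real.sqrt_nonneg _) (vecNorm_nonneg x))

lemma eta_eq_of_forall_le {N : (Fin (m+1) → Matrix n n ℂ) → ℝ} {S : Set (Fin (m+1) → Matrix n n ℂ)}
    {lam : ℂ} {x : n → ℂ} {A Δ₀ : Fin (m+1) → Matrix n n ℂ} {c : ℝ} (hΔ₀ : Δ₀ ∈ S)
    (hfeas : (polyEval A lam + polyEval Δ₀ lam) *ᵥ x = 0) (hle : N Δ₀ ≤ c)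
    (hge : ∀ Δ ∈ S, (polyEval A lam + polyEval Δ lam) *ᵥ x = 0 → c ≤ N Δ) :
    eta N S lam x A = c := by
  have hlower :
      c ∈ lowerBounds {t | ∃ Δ ∈ S, (polyEval A lam + polyEval Δ lam) *ᵥ x = 0 ∧ t = N Δ} := by
    rintro _ ⟨Δ, hΔ, hf, rfl⟩
    exact hge Δ hΔ hf
  exact le_antisymm ((csInf_le ⟨c, hlower⟩ ⟨Δ₀, hΔ₀, hfeas, rfl⟩).trans hle)
    (le_csInf ⟨_, Δ₀, hΔ₀, hfeas, rfl⟩ hlower)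

lemma polyEval_add_mulVec_eq_zero_iff (A Δ : Fin (m+1) → Matrix n n ℂ) (z : ℂ) (x : n → ℂ) :
    (polyEval A z + polyEval Δ z) *ᵥ x = 0 ↔ polyEval Δ z *ᵥ x = -(polyEval A z *ᵥ x) := by
  rw [add_mulVec, add_eq_zero_iff_neg_eq, eq_comm]

variable {V : Type*} [SeminormedAddCommGroup V] [NormedSpace ℂ V] (Φ : Matrix n n ℂ →ₗ[ℂ] V)

lemma eta_polyNormOf_eq {S : Set (Fin (m+1) → Matrix n n ℂ)} {A : Fin (m+1) → Matrix n n ℂ}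
    {lam : ℂ} {x : n → ℂ} (hx : x ≠ 0) {K : Matrix n n ℂ} {κ : ℝ}
    (hKx : K *ᵥ x = (vecNormSq x : ℂ) • (polyEval A lam *ᵥ x))
    (hKS : minimalPerturbation m lam ((vecNormSq x : ℂ)⁻¹ • K) ∈ S)
    (hK : ‖Φ K‖ ≤ κ * (vecNorm x * vecNorm (polyEval A lam *ᵥ x)))
    (hS : ∀ Δ ∈ S, κ * vecNorm (polyEval Δ lam *ᵥ x) ≤ ‖Φ (polyEval Δ lam)‖ * vecNorm x) :
    eta (polyNormOf (‖Φ ·‖)) S lam x A = κ * normalizedResidual A lam x := by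
  have hX := vecNorm_pos hx
  have hL := Real.sqrt_pos.mpr (lamNormSq_pos m lam)
  have hXc : (vecNormSq x : ℂ) ≠ 0 := by
    rw [← vecNorm_sq]
    exact_mod_cast (pow_pos hX 2).ne'
  refine eta_eq_of_forall_le hKS ?_ ?_ fun Δ hΔ hfeas => ?_
  · rw [polyEval_add_mulVec_eq_zero_iff, polyEval_minimalPerturbation, neg_mulVec, smul_mulVec,
      hKx, inv_smul_smul₀ hXc]
  · rw [polyNormOf_minimalPerturbation, map_smul, norm_smul, norm_inv, Complex.norm_real,
      Real.norm_of_nonneg (vecNormSq_nonneg x), ← vecNorm_sq, normalizedResidual,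
      div_le_iff₀ hL]
    calc (vecNorm x ^ 2)⁻¹ * ‖Φ K‖
        ≤ (vecNorm x ^ 2)⁻¹ * (κ * (vecNorm x * vecNorm (polyEval A lam *ᵥ x))) := by gcongr
      _ = _ := by field_simp
  · rw [polyEval_add_mulVec_eq_zero_iff] at hfeas
    have h := (hS Δ hΔ).trans (mul_le_mul_of_nonneg_right (norm_map_polyEval_le Φ Δ lam) hX.le)
    rw [hfeas, vecNorm_neg] at h
    rw [normalizedResidual, mul_div_assoc', div_le_iff₀ (by positivity)]
    linarith

end BackwardErrors

section StructuredBackwardErrors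

variable {n : Type*} [Fintype n] [DecidableEq n] {m : ℕ} {A : Fin (m+1) → Matrix n n ℂ}
  {lam : ℂ} {x : n → ℂ}

def spectralMap : Matrix n n ℂ →ₗ[ℂ] EuclideanSpace ℂ n →L[ℂ] EuclideanSpace ℂ n :=
  (toEuclideanCLM (n := n) (𝕜 := ℂ)).toAlgEquiv.toLinearMap

lemma norm_spectralMap (M : Matrix n n ℂ) : ‖spectralMap M‖ = specNorm M := rfl

lemma polyNorm2_eq_polyNormOf :
    polyNorm2 (ι := n) (m := m) = polyNormOf (fun M : Matrix n n ℂ => ‖spectralMap M‖) := rfl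

lemma eta_univ_eq {V : Type*} [SeminormedAddCommGroup V] [NormedSpace ℂ V]
    (Φ : Matrix n n ℂ →ₗ[ℂ] V) (hspec : ∀ M, specNorm M ≤ ‖Φ M‖)
    (hfrob : ∀ M, ‖Φ M‖ ≤ ‖frobeniusVec M‖) (hx : x ≠ 0) :
    eta (polyNormOf (‖Φ ·‖)) Set.univ lam x A = normalizedResidual A lam x := by
  rw [← one_mul (normalizedResidual A lam x)]
  refine eta_polyNormOf_eq Φ hx (K := vecMulVec (polyEval A lam *ᵥ x) (star x)) ?_ (Set.mem_univ _)
    ?_ fun Δ _ => ?_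
  · rw [vecMulVec_mulVec, op_smul_eq_smul, star_dotProduct_self]
  · rw [one_mul, mul_comm]
    exact (hfrob _).trans_eq (norm_frobeniusVec_vecMulVec _ _ |>.trans (by rw [vecNorm_star]))
  · rw [one_mul]
    exact (vecNorm_mulVec_le_specNorm _ x).trans
      (mul_le_mul_of_nonneg_right (hspec _) (vecNorm_nonneg x))

lemma eta_polyNormF_univ (hx : x ≠ 0) :
    eta polyNormF Set.univ lam x A = normalizedResidual A lam x := by
  rw [polyNormF_eq_polyNormOf]
  exact (eta_univ_eq frobeniusVec specNorm_le_frobenius (fun _ => le_rfl) hx :)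

lemma eta_polyNorm2_univ (hx : x ≠ 0) :
    eta polyNorm2 Set.univ lam x A = normalizedResidual A lam x := by
  rw [polyNorm2_eq_polyNormOf]
  exact (eta_univ_eq spectralMap (fun M => (norm_spectralMap M).ge)
    (fun M => (norm_spectralMap M).trans_le (specNorm_le_frobenius M)) hx :)

lemma eta_polyNormF_skewSymPoly (hx : x ≠ 0) (hxr : x ⬝ᵥ (polyEval A lam *ᵥ x) = 0) :
    eta polyNormF SkewSymPoly lam x A = √2 * normalizedResidual A lam x := by
  rw [polyNormF_eq_polyNormOf]
  exact (eta_polyNormOf_eq frobeniusVec hx (skewOuter_mulVec_self hxr)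
    (minimalPerturbation_mem_skewSymPoly (transpose_smul_skewOuter _ _ _) lam)
    (norm_frobeniusVec_skewOuter hxr).le
    fun _ hΔ => sqrt_two_mul_vecNorm_mulVec_le_frobenius (transpose_polyEval hΔ lam) x :)

lemma eta_polyNorm2_skewSymPoly (hx : x ≠ 0) (hxr : x ⬝ᵥ (polyEval A lam *ᵥ x) = 0) :
    eta polyNorm2 SkewSymPoly lam x A = normalizedResidual A lam x := by
  rw [polyNorm2_eq_polyNormOf, ← one_mul (normalizedResidual A lam x)]
  have hnorm : ‖spectralMap (skewOuter x (polyEval A lam *ᵥ x))‖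
      ≤ 1 * (vecNorm x * vecNorm (polyEval A lam *ᵥ x)) := by
    rw [one_mul, norm_spectralMap]
    exact specNorm_le_of_forall (mul_nonneg (vecNorm_nonneg _) (vecNorm_nonneg _))
      (vecNorm_skewOuter_mulVec_le hxr)
  exact (eta_polyNormOf_eq spectralMap hx (skewOuter_mulVec_self hxr)
    (minimalPerturbation_mem_skewSymPoly (transpose_smul_skewOuter _ _ _) lam)
    hnorm fun _ _ => (one_mul _).trans_le (vecNorm_mulVec_le_specNorm _ x) :)

end StructuredBackwardErrors

section GeometricSums

variable {t : ℝ}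

lemma pow_add_pow_sub_le_one_add_pow (ht : 0 ≤ t) {j m : ℕ} (hj : j ≤ m) :
    t ^ j + t ^ (m - j) ≤ 1 + t ^ m := by
  have hprod : t ^ j * t ^ (m - j) = t ^ m := by rw [← pow_add, Nat.add_sub_cancel' hj]
  rcases le_total t 1 with h | h
  · nlinarith [pow_le_one₀ ht h (n := j), pow_le_one₀ ht h (n := m - j)]
  · nlinarith [one_le_pow₀ h (n := j), one_le_pow₀ h (n := m - j)]

lemma two_mul_geom_sum_le (ht : 0 ≤ t) (m : ℕ) :
    2 * ∑ j ∈ range (m + 1), t ^ j ≤ (m + 1) * (1 + t ^ m) := by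
  have h := sum_le_sum fun j (hj : j ∈ range (m + 1)) =>
    pow_add_pow_sub_le_one_add_pow ht (Nat.lt_succ_iff.mp (mem_range.mp hj))
  have hreflect : ∑ j ∈ range (m + 1), t ^ (m - j) = ∑ j ∈ range (m + 1), t ^ j := by
    simpa using sum_range_reflect (fun j => t ^ j) (m + 1)
  rw [sum_add_distrib, hreflect, sum_const, card_range, nsmul_eq_mul] at h
  push_cast at h
  linarith

lemma geom_sum_succ_le_one_add_mul_geom_sum (ht : 0 ≤ t) {m : ℕ} (hm : 1 ≤ m) :
    ∑ j ∈ range (m + 1), t ^ j ≤ (1 + t) * ∑ j ∈ range m, t ^ j := by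
  have hW : 1 ≤ ∑ j ∈ range m, t ^ j := by
    simpa using single_le_sum (fun j _ => pow_nonneg ht j) (mem_range.mpr hm)
  rw [geom_sum_succ]
  linarith

lemma mul_one_add_mul_geom_sum_le (ht : 0 ≤ t) (m : ℕ) :
    (m + 1) * ((1 + t) * ∑ j ∈ range m, t ^ j) ≤ 2 * m * ∑ j ∈ range (m + 1), t ^ j := by
  have h1 := geom_sum_succ (x := t) (n := m)
  have h2 := geom_sum_succ' (x := t) (n := m)
  nlinarith [two_mul_geom_sum_le ht m]

end GeometricSums

lemma lamNormSq_eq_geom_sum (m : ℕ) (z : ℂ) :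
    lamNormSq m z = ∑ j ∈ range (m + 1), (‖z‖ ^ 2) ^ j := by
  rw [lamNormSq, Fin.sum_univ_eq_sum_range (fun j => ‖z ^ j‖ ^ 2)]
  exact sum_congr rfl fun j _ => by rw [norm_pow, ← pow_mul, ← pow_mul, mul_comm]

lemma vecNormSq_lamVec (m : ℕ) (z : ℂ) :
    vecNormSq (lamVec m z) = ∑ j ∈ range m, (‖z‖ ^ 2) ^ j := by
  rw [vecNormSq, ← sum_range_reflect (fun j => (‖z‖ ^ 2) ^ j),
    ← Fin.sum_univ_eq_sum_range (fun j => (‖z‖ ^ 2) ^ (m - 1 - j))]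
  exact sum_congr rfl fun j _ => by rw [lamVec, norm_pow, ← pow_mul, ← pow_mul, mul_comm]

lemma lamNormSq_one (z : ℂ) : lamNormSq 1 z = 1 + ‖z‖ ^ 2 := by
  simp [lamNormSq_eq_geom_sum, sum_range_succ]

lemma one_le_vecNormSq_lamVec {m : ℕ} (hm : 1 ≤ m) (z : ℂ) : 1 ≤ vecNormSq (lamVec m z) := by
  rw [vecNormSq_lamVec]
  have h := single_le_sum (f := fun j => (‖z‖ ^ 2) ^ j) (fun j _ => by positivity)
    (mem_range.mpr hm)
  rwa [pow_zero] at h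

def linearizationFactor (m : ℕ) (z : ℂ) : ℝ :=
  √(lamNormSq m z / (lamNormSq 1 z * vecNormSq (lamVec m z)))

lemma linearizationFactor_le_one {m : ℕ} (hm : 1 ≤ m) (z : ℂ) : linearizationFactor m z ≤ 1 := by
  have hW := one_le_vecNormSq_lamVec hm z
  rw [linearizationFactor, Real.sqrt_le_one, div_le_one (mul_pos (lamNormSq_pos 1 z) (by linarith)),
    lamNormSq_one, lamNormSq_eq_geom_sum, vecNormSq_lamVec]
  exact geom_sum_succ_le_one_add_mul_geom_sum (sq_nonneg ‖z‖) hm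

lemma sqrt_le_linearizationFactor (m : ℕ) (z : ℂ) :
    √(((m : ℝ) + 1) / (2 * m)) ≤ linearizationFactor m z := by
  rcases Nat.eq_zero_or_pos m with rfl | hm
  · simp [linearizationFactor]
  have hW := one_le_vecNormSq_lamVec hm z
  refine Real.sqrt_le_sqrt ?_
  rw [div_le_div_iff₀ (by positivity) (mul_pos (lamNormSq_pos 1 z) (by linarith)), lamNormSq_one,
    lamNormSq_eq_geom_sum, vecNormSq_lamVec]
  linarith [mul_one_add_mul_geom_sum_le (sq_nonneg ‖z‖) m]

lemma normalizedResidual_linearization {n m : ℕ} {A : Fin (m+1) → Matrix (Fin n) (Fin n) ℂ}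
    {B : Fin (1+1) → Matrix (Fin m × Fin n) (Fin m × Fin n) ℂ} {v : Fin m → ℂ}
    (hL : InL1 A B v) (hv : vecNormSq v = 1) (z : ℂ) (x : Fin n → ℂ) :
    normalizedResidual B z (kronVec (lamVec m z) x)
      = linearizationFactor m z * normalizedResidual A z x := by
  have hP := (Real.sqrt_pos.mpr (lamNormSq_pos m z)).ne'
  have hv' : vecNorm v = 1 := by rw [vecNorm, hv, Real.sqrt_one]
  rw [normalizedResidual, normalizedResidual, linearizationFactor, hL z x, vecNorm_kronVec,
    vecNorm_kronVec, hv', one_mul,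
    Real.sqrt_div' _ (mul_nonneg (lamNormSq_pos 1 z).le (vecNormSq_nonneg _)),
    Real.sqrt_mul (lamNormSq_pos 1 z).le, ← vecNorm, div_mul_div_comm,
    show √(lamNormSq 1 z) * vecNorm (lamVec m z) * (√(lamNormSq m z) * vecNorm x)
      = √(lamNormSq m z) * (√(lamNormSq 1 z) * (vecNorm (lamVec m z) * vecNorm x)) by ring,
    mul_div_mul_left _ _ hP]

lemma kronVec_ne_zero {a b : ℕ} {v : Fin a → ℂ} {y : Fin b → ℂ} (hv : v ≠ 0) (hy : y ≠ 0) :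
    kronVec v y ≠ 0 := by
  obtain ⟨i, hi⟩ := Function.ne_iff.mp hv
  obtain ⟨k, hk⟩ := Function.ne_iff.mp hy
  exact Function.ne_iff.mpr ⟨(i, k), mul_ne_zero hi hk⟩

lemma lamVec_ne_zero {m : ℕ} (hm : 1 ≤ m) (z : ℂ) : lamVec m z ≠ 0 :=
  Function.ne_iff.mpr ⟨⟨m - 1, by omega⟩, by simp [lamVec]⟩

theorem skewsymmetric_linearization_backward_error_general {n m : ℕ} (hm : 1 ≤ m)
    (A : Fin (m+1) → Matrix (Fin n) (Fin n) ℂ)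
    (hA : A ∈ SkewSymPoly)
    (B : Fin (1+1) → Matrix (Fin m × Fin n) (Fin m × Fin n) ℂ)
    (hB : B ∈ SkewSymPoly)
    (v : Fin m → ℂ) (hv : vecNormSq v = 1) (hL : InL1 A B v)
    (lam : ℂ) (x : Fin n → ℂ) (hx : star x ⬝ᵥ x = 1) :
    (Real.sqrt (((m : ℝ) + 1) / (2 * m)) * eta polyNormF SkewSymPoly lam x A
        ≤ eta polyNormF SkewSymPoly lam (kronVec (lamVec m lam) x) B ∧
      eta polyNormF SkewSymPoly lam (kronVec (lamVec m lam) x) B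
        ≤ eta polyNormF SkewSymPoly lam x A) ∧
    (Real.sqrt (((m : ℝ) + 1) / (2 * m)) * eta polyNorm2 SkewSymPoly lam x A
        ≤ eta polyNorm2 SkewSymPoly lam (kronVec (lamVec m lam) x) B ∧
      eta polyNorm2 SkewSymPoly lam (kronVec (lamVec m lam) x) B
        ≤ eta polyNorm2 SkewSymPoly lam x A) ∧
    (eta polyNormF Set.univ lam x A ≠ 0 → eta polyNormF SkewSymPoly lam x A ≠ 0 →
      eta polyNormF SkewSymPoly lam (kronVec (lamVec m lam) x) B
          / eta polyNormF SkewSymPoly lam x A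
        = eta polyNormF Set.univ lam (kronVec (lamVec m lam) x) B
          / eta polyNormF Set.univ lam x A) ∧
    (eta polyNorm2 Set.univ lam x A ≠ 0 → eta polyNorm2 SkewSymPoly lam x A ≠ 0 →
      eta polyNorm2 SkewSymPoly lam (kronVec (lamVec m lam) x) B
          / eta polyNorm2 SkewSymPoly lam x A
        = eta polyNorm2 Set.univ lam (kronVec (lamVec m lam) x) B
          / eta polyNorm2 Set.univ lam x A) := by
  have hx0 : x ≠ 0 := by
    rintro rfl
    simp at hx
  have hw0 := kronVec_ne_zero (lamVec_ne_zero hm lam) hx0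
  have hxr := dotProduct_mulVec_self_eq_zero (transpose_polyEval hA lam) x
  have hwr := dotProduct_mulVec_self_eq_zero (transpose_polyEval hB lam) (kronVec (lamVec m lam) x)
  rw [eta_polyNormF_skewSymPoly hx0 hxr, eta_polyNormF_skewSymPoly hw0 hwr,
    eta_polyNorm2_skewSymPoly hx0 hxr, eta_polyNorm2_skewSymPoly hw0 hwr,
    eta_polyNormF_univ hx0, eta_polyNormF_univ hw0, eta_polyNorm2_univ hx0,
    eta_polyNorm2_univ hw0, normalizedResidual_linearization hL hv]
  have hlow := sqrt_le_linearizationFactor m lam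
  have hup := linearizationFactor_le_one hm lam
  have hρ := normalizedResidual_nonneg A lam x
  have hle : linearizationFactor m lam * normalizedResidual A lam x ≤ normalizedResidual A lam x :=
    mul_le_of_le_one_left hρ hup
  refine ⟨⟨?_, by gcongr⟩, ⟨?_, hle⟩, fun _ _ => mul_div_mul_left _ _ (by positivity),
    fun _ _ => rfl⟩
  · rw [mul_left_comm]
    gcongr
  · gcongr

/-- Structured backward errors under skew-symmetric linearization of a
skew-symmetric matrix polynomial, for both the Frobenius and the spectral norm, together
with the equality of the structured and unstructured ratios whenever defined. -/
theorem skewsymmetric_linearization_backward_error {n m : ℕ} (hm : 1 ≤ m)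
    (A : Fin (m+1) → Matrix (Fin n) (Fin n) ℂ)
    (hA : A ∈ SkewSymPoly) (hreg : Regular A) (hlead : A (Fin.last m) ≠ 0)
    (B : Fin (1+1) → Matrix (Fin m × Fin n) (Fin m × Fin n) ℂ)
    (hB : B ∈ SkewSymPoly)
    (v : Fin m → ℂ) (hv : vecNormSq v = 1) (hL : InL1 A B v)
    (lam : ℂ) (x : Fin n → ℂ) (hx : star x ⬝ᵥ x = 1) :
    (Real.sqrt (((m : ℝ) + 1) / (2 * m)) * eta polyNormF SkewSymPoly lam x A
        ≤ eta polyNormF SkewSymPoly lam (kronVec (lamVec m lam) x) B ∧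
      eta polyNormF SkewSymPoly lam (kronVec (lamVec m lam) x) B
        ≤ eta polyNormF SkewSymPoly lam x A) ∧
    (Real.sqrt (((m : ℝ) + 1) / (2 * m)) * eta polyNorm2 SkewSymPoly lam x A
        ≤ eta polyNorm2 SkewSymPoly lam (kronVec (lamVec m lam) x) B ∧
      eta polyNorm2 SkewSymPoly lam (kronVec (lamVec m lam) x) B
        ≤ eta polyNorm2 SkewSymPoly lam x A) ∧
    (eta polyNormF Set.univ lam x A ≠ 0 → eta polyNormF SkewSymPoly lam x A ≠ 0 →
      eta polyNormF SkewSymPoly lam (kronVec (lamVec m lam) x) B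
          / eta polyNormF SkewSymPoly lam x A
        = eta polyNormF Set.univ lam (kronVec (lamVec m lam) x) B
          / eta polyNormF Set.univ lam x A) ∧
    (eta polyNorm2 Set.univ lam x A ≠ 0 → eta polyNorm2 SkewSymPoly lam x A ≠ 0 →
      eta polyNorm2 SkewSymPoly lam (kronVec (lamVec m lam) x) B
          / eta polyNorm2 SkewSymPoly lam x A
        = eta polyNorm2 Set.univ lam (kronVec (lamVec m lam) x) B
          / eta polyNorm2 Set.univ lam x A) :=
  skewsymmetric_linearization_backward_error_general hm A hA B hB v hv hL lam x hx
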